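/- For all integers m ≥ 1 and 0 ≤ l ≤ m, one has C(2m, m+l) = Σ_{k=0}^{m−l} C(2m−(k+l)−1, m−1) · C(k+l, l), where C(p,q) denotes the binomial coefficient. -/

import Mathlib

/-!
Since `(1 - X)⁻¹ ^ (d + 1) = ∑ₙ C(d + n, d) Xⁿ`, comparing coefficients of `X ^ (m - l)` in
`(1 - X)⁻¹ ^ (l + 1) * (1 - X)⁻¹ ^ m = (1 - X)⁻¹ ^ (m + l + 1)` gives the identity, because
`2m - (k + l) - 1 = (m - 1) + (m - l - k)` for `k ≤ m - l`.
-/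

open Finset PowerSeries

theorem Nat.sum_antidiagonal_add_choose_mul_add_choose (a b n : ℕ) :
    ∑ ij ∈ antidiagonal n, (a + ij.1).choose a * (b + ij.2).choose b =
      (a + b + 1 + n).choose (a + b + 1) := by
  have h := congrArg (fun f : ℤ⟦X⟧ ↦ coeff n f)
    (congrArg Units.val (invOneSubPow_add ℤ (d := a + 1) (b + 1)))
  simp only [Units.val_mul, show a + 1 + (b + 1) = a + b + 1 + 1 by omega,
    invOneSubPow_val_succ_eq_mk_add_choose, coeff_mul, coeff_mk] at h
  exact_mod_cast h.symm

/-- The Vandermonde-type identity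
`C(2m, m+l) = ∑_{k=0}^{m-l} C(2m-(k+l)-1, m-1) * C(k+l, l)`. -/
theorem vandermonde_identity_proj (m l : ℕ) (hm : 1 ≤ m) (hl : l ≤ m) :
    (2 * m).choose (m + l) =
      ∑ k ∈ Finset.range (m - l + 1),
        (2 * m - (k + l) - 1).choose (m - 1) * (k + l).choose l := by
  have h := Nat.sum_antidiagonal_add_choose_mul_add_choose l (m - 1) (m - l)
  rw [Nat.sum_antidiagonal_eq_sum_range_succ
      (fun i j ↦ (l + i).choose l * (m - 1 + j).choose (m - 1)),
    show l + (m - 1) + 1 = m + l by omega, show m + l + (m - l) = 2 * m by omega] at h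
  rw [← h]
  refine sum_congr rfl fun k hk ↦ ?_
  rw [mem_range] at hk
  rw [mul_comm, add_comm k l, show 2 * m - (l + k) - 1 = m - 1 + (m - l - k) by omega]
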